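/- Let p and q be supported-below probability distributions on ℤ. Then p ≻_a q and q ≻_a p hold simultaneously if and only if there exists an integer k such that p = Υ_k q, i.e., p(n) = q(n−k) for all n ∈ ℤ. -/
import Mathlib


/-- Convolution of two sequences on `ℤ`: `(a*b)(n) = ∑_{k∈ℤ} a(k)·b(n−k)`.
For supported-below sequences this `tsum` has finitely many nonzero terms. -/
noncomputable def conv (a b : ℤ → ℝ) : ℤ → ℝ := fun n => ∑' k : ℤ, a k * b (n - k)

/-- A sequence is supported below if it vanishes for all sufficiently negative indices. -/
def SuppBelow (a : ℤ → ℝ) : Prop := ∃ N : ℤ, ∀ n : ℤ, n < N → a n = 0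

/-- A probability distribution on `ℤ`: nonnegative with total sum 1. -/
def IsProbDist (p : ℤ → ℝ) : Prop := (∀ n : ℤ, 0 ≤ p n) ∧ HasSum p 1

/-- `qt` is the reciprocal sequence `q̃` of `q`, relative to `nstar = n_*(q)`,
the least index where `q` is positive: `q̃` vanishes below `−n_*(q)` and
`(q̃*q)(n) = δ_{n,0}` for all `n`. -/
def IsRecip (q qt : ℤ → ℝ) (nstar : ℤ) : Prop :=
  IsLeast {n : ℤ | 0 < q n} nstar ∧ (∀ n : ℤ, n < -nstar → qt n = 0) ∧
  (∀ n : ℤ, conv qt q n = if n = 0 then (1 : ℝ) else 0)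

/-- The generalized Poisson sequence `P_λ : ℤ → ℝ`,
`P_λ(n) = e^{−λ}·λ^n/n!` for `n ≥ 0` and `P_λ(n) = 0` for `n < 0`. -/
noncomputable def poisson (lam : ℝ) : ℤ → ℝ :=
  fun n => if 0 ≤ n then Real.exp (-lam) * lam ^ n.toNat / (Nat.factorial n.toNat : ℝ) else 0

lemma supp_summable {a b : ℤ → ℝ} {A B : ℤ} (ha : ∀ n : ℤ, n < A → a n = 0)
    (hb : ∀ n : ℤ, n < B → b n = 0) (n : ℤ) :
    Summable (fun k => a k * b (n - k)) := by
  apply summable_of_ne_finset_zero (s := Finset.Icc A (n - B))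
  intro k hk
  simp only [Finset.mem_Icc, not_and, not_le] at hk
  by_cases h : A ≤ k
  · rw [hb _ (by have := hk h; omega), mul_zero]
  · rw [ha _ (by omega), zero_mul]

lemma conv_comm (a b : ℤ → ℝ) : conv a b = conv b a := by
  funext n
  unfold conv
  rw [← (Equiv.subLeft n).tsum_eq (fun k => b k * a (n - k))]
  exact tsum_congr fun k => by simp [Equiv.subLeft, sub_sub_cancel, mul_comm]

lemma conv_single_left {a : ℤ → ℝ} (b : ℤ → ℝ) {j : ℤ} (ha : ∀ m : ℤ, m ≠ j → a m = 0)
    (n : ℤ) : conv a b n = a j * b (n - j) :=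
  tsum_eq_single j fun k hk => by rw [ha k hk, zero_mul]

lemma conv_eq_zero {a b : ℤ → ℝ} {A B : ℤ} (ha : ∀ n : ℤ, n < A → a n = 0)
    (hb : ∀ n : ℤ, n < B → b n = 0) {n : ℤ} (hn : n < A + B) : conv a b n = 0 := by
  unfold conv
  convert tsum_zero with k
  by_cases h : k < A
  · rw [ha _ h, zero_mul]
  · rw [hb _ (by omega), mul_zero]

lemma conv_apply_min {a b : ℤ → ℝ} {A B : ℤ} (ha : ∀ n : ℤ, n < A → a n = 0)
    (hb : ∀ n : ℤ, n < B → b n = 0) : conv a b (A + B) = a A * b B := by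
  unfold conv
  rw [tsum_eq_single A]
  · rw [show A + B - A = B by ring]
  · intro k hk
    rcases lt_or_gt_of_ne hk with h | h
    · rw [ha _ h, zero_mul]
    · rw [hb _ (by omega), mul_zero]

lemma conv_nonneg' {a b : ℤ → ℝ} (ha : ∀ n, 0 ≤ a n) (hb : ∀ n, 0 ≤ b n) (n : ℤ) :
    0 ≤ conv a b n :=
  tsum_nonneg fun k => mul_nonneg (ha k) (hb _)

lemma eq_zero_of_tsum_eq {f : ℤ → ℝ} (hf : Summable f) (h0 : ∀ k, 0 ≤ f k)
    {i j : ℤ} (hij : j ≠ i) (hsum : ∑' k, f k = f i) : f j = 0 := by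
  have h := Summable.sum_le_tsum ({i, j} : Finset ℤ) (fun k _ => h0 k) hf
  rw [Finset.sum_pair (Ne.symm hij)] at h
  have := h0 j
  linarith [hsum ▸ h]

lemma conv_assoc {a b c : ℤ → ℝ} {A B C : ℤ} (ha : ∀ n : ℤ, n < A → a n = 0)
    (hb : ∀ n : ℤ, n < B → b n = 0) (hc : ∀ n : ℤ, n < C → c n = 0) :
    conv (conv a b) c = conv a (conv b c) := by
  funext n
  have hF : Summable (Function.uncurry (fun k m => a k * b (m - k) * c (n - m))) := by
    apply summable_of_ne_finset_zero
      (s := Finset.Icc A (n - B - C) ×ˢ Finset.Icc (A + B) (n - C))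
    rintro ⟨k, m⟩ hk
    by_contra hne
    have h1 : a k ≠ 0 := fun h => hne (by simp [Function.uncurry, h])
    have h2 : b (m - k) ≠ 0 := fun h => hne (by simp [Function.uncurry, h])
    have h3 : c (n - m) ≠ 0 := fun h => hne (by simp [Function.uncurry, h])
    have hA : A ≤ k := not_lt.1 fun h => h1 (ha _ h)
    have hB : B ≤ m - k := not_lt.1 fun h => h2 (hb _ h)
    have hC : C ≤ n - m := not_lt.1 fun h => h3 (hc _ h)
    exact hk (by simp only [Finset.mem_product, Finset.mem_Icc]; omega)
  calc conv (conv a b) c n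
      = ∑' m, ∑' k, a k * b (m - k) * c (n - m) := by
        unfold conv; exact tsum_congr fun m => tsum_mul_right.symm
    _ = ∑' k, ∑' m, a k * b (m - k) * c (n - m) := Summable.tsum_comm hF
    _ = conv a (conv b c) n := by
        unfold conv
        refine tsum_congr fun k => ?_
        have he : (fun m => a k * b (m - k) * c (n - m)) =
            (fun m => a k * (b m * c (n - k - m))) ∘ (Equiv.subRight k) := by
          funext m
          simp only [Function.comp, Equiv.subRight_apply]
          rw [show n - k - (m - k) = n - m by ring, mul_assoc]
        rw [he, Function.comp_def,
          (Equiv.subRight k).tsum_eq (fun m => a k * (b m * c (n - k - m)))]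
        exact tsum_mul_left

/-- for supported-below probability distributions `p, q`,
`p ≻_a q` and `q ≻_a p` hold simultaneously iff `p` is an integer shift of
`q`: there is `k ∈ ℤ` with `p(n) = q(n−k)` for all `n`. -/
theorem amaj_antisymm_shift (p q pt qt : ℤ → ℝ) (np nq : ℤ)
    (hp : IsProbDist p) (hq : IsProbDist q)
    (hpb : SuppBelow p) (hqb : SuppBelow q)
    (hpt : IsRecip p pt np) (hqt : IsRecip q qt nq) :
    ((∀ n : ℤ, 0 ≤ conv p qt n) ∧ (∀ n : ℤ, 0 ≤ conv q pt n)) ↔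
      (∃ k : ℤ, ∀ n : ℤ, p n = q (n - k)) := by
  obtain ⟨hpnn, hpsum⟩ := hp
  obtain ⟨hqnn, hqsum⟩ := hq
  obtain ⟨⟨hppos, hplb⟩, hpts, hptc⟩ := hpt
  obtain ⟨⟨hqpos, hqlb⟩, hqts, hqtc⟩ := hqt
  simp only [Set.mem_setOf_eq] at hppos hqpos
  have hp0 : ∀ n : ℤ, n < np → p n = 0 := fun n hn => by
    rcases (hpnn n).eq_or_lt with h | h
    · exact h.symm
    · exact absurd (hplb h) (not_le.2 hn)
  have hq0 : ∀ n : ℤ, n < nq → q n = 0 := fun n hn => by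
    rcases (hqnn n).eq_or_lt with h | h
    · exact h.symm
    · exact absurd (hqlb h) (not_le.2 hn)
  constructor
  · rintro ⟨hr, hs⟩
    have hr0 : ∀ n : ℤ, n < np - nq → conv p qt n = 0 := fun n hn =>
      conv_eq_zero hp0 hqts (by omega)
    have hs0 : ∀ n : ℤ, n < nq - np → conv q pt n = 0 := fun n hn =>
      conv_eq_zero hq0 hpts (by omega)
    have hqtv : qt (-nq) * q nq = 1 := by
      have h := conv_apply_min hqts hq0
      rw [show -nq + nq = 0 by ring, hqtc 0] at h
      simpa using h.symm
    have hptv : pt (-np) * p np = 1 := by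
      have h := conv_apply_min hpts hp0
      rw [show -np + np = 0 by ring, hptc 0] at h
      simpa using h.symm
    have hqtpos : 0 < qt (-nq) := by nlinarith
    have hptpos : 0 < pt (-np) := by nlinarith
    have hsmin : conv q pt (nq - np) = q nq * pt (-np) := by
      have h := conv_apply_min hq0 hpts
      rwa [show nq + -np = nq - np by ring] at h
    have hsminpos : 0 < conv q pt (nq - np) := by
      rw [hsmin]; exact mul_pos hqpos hptpos
    have hδq : conv qt q = fun m => if m = 0 then (1 : ℝ) else 0 := funext hqtc
    have hδp : conv pt p = fun m => if m = 0 then (1 : ℝ) else 0 := funext hptc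
    have hconvdelta : ∀ a : ℤ → ℝ, conv a (fun m => if m = 0 then (1 : ℝ) else 0) = a := by
      intro a
      rw [conv_comm]
      funext n
      rw [conv_single_left a (j := 0) (fun m hm => if_neg hm) n]
      simp
    have hrq : conv (conv p qt) q = p := by
      rw [conv_assoc hp0 hqts hq0, hδq, hconvdelta]
    have hsp : conv (conv q pt) p = q := by
      rw [conv_assoc hq0 hpts hp0, hδp, hconvdelta]
    have htq : conv (conv (conv q pt) (conv p qt)) q = q := by
      rw [conv_assoc hs0 hr0 hq0, hrq, hsp]
    have ht0 : ∀ n, 0 ≤ conv (conv q pt) (conv p qt) n := conv_nonneg' hs hr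
    have htsupp : ∀ n : ℤ, n < 0 → conv (conv q pt) (conv p qt) n = 0 := fun n hn =>
      conv_eq_zero hs0 hr0 (by omega)
    have ht0val : conv (conv q pt) (conv p qt) 0 = 1 := by
      have h2 := conv_apply_min htsupp hq0
      rw [show (0 : ℤ) + nq = nq by ring, htq] at h2
      have h3 : conv (conv q pt) (conv p qt) 0 * q nq = 1 * q nq := by linarith
      exact mul_right_cancel₀ (ne_of_gt hqpos) h3
    have htj : ∀ j : ℤ, j ≠ 0 → conv (conv q pt) (conv p qt) j = 0 := by
      intro j hj
      rcases lt_or_gt_of_ne hj with h | h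
      · exact htsupp j h
      · have hsum : Summable (fun k => conv (conv q pt) (conv p qt) k * q (nq + j - k)) :=
          supp_summable htsupp hq0 _
        have hnn : ∀ k, 0 ≤ conv (conv q pt) (conv p qt) k * q (nq + j - k) :=
          fun k => mul_nonneg (ht0 k) (hqnn _)
        have h1 : conv (conv (conv q pt) (conv p qt)) q (nq + j) = q (nq + j) := by rw [htq]
        have hts : (∑' k, conv (conv q pt) (conv p qt) k * q (nq + j - k)) =
            conv (conv q pt) (conv p qt) 0 * q (nq + j - 0) := by
          rw [ht0val, show nq + j - 0 = nq + j by ring, one_mul]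
          exact h1
        have hz := eq_zero_of_tsum_eq hsum hnn hj hts
        rw [show nq + j - j = nq by ring] at hz
        exact (mul_eq_zero.1 hz).resolve_right (ne_of_gt hqpos)
    have hrsingle : ∀ m : ℤ, m ≠ np - nq → conv p qt m = 0 := by
      intro m hm
      have hn : m + (nq - np) ≠ 0 := by omega
      have hsum : Summable (fun k => conv q pt k * conv p qt (m + (nq - np) - k)) :=
        supp_summable hs0 hr0 _
      have hnn : ∀ k, 0 ≤ conv q pt k * conv p qt (m + (nq - np) - k) :=
        fun k => mul_nonneg (hs k) (hr _)
      have hzero : (∑' k, conv q pt k * conv p qt (m + (nq - np) - k)) = 0 :=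
        htj _ hn
      have hle := Summable.le_tsum hsum (nq - np) (fun j _ => hnn j)
      rw [hzero] at hle
      have heq : conv q pt (nq - np) * conv p qt (m + (nq - np) - (nq - np)) = 0 :=
        le_antisymm hle (hnn _)
      rw [show m + (nq - np) - (nq - np) = m by ring] at heq
      exact (mul_eq_zero.1 heq).resolve_left (ne_of_gt hsminpos)
    obtain ⟨c, hc⟩ : ∃ c : ℝ, conv p qt (np - nq) = c := ⟨_, rfl⟩
    have hpn : ∀ n : ℤ, p n = c * q (n - (np - nq)) := by
      intro n
      have h := conv_single_left q hrsingle n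
      rw [hrq, hc] at h
      exact h
    have hshift : HasSum (fun n : ℤ => q (n - (np - nq))) 1 :=
      ((Equiv.subRight (np - nq)).hasSum_iff).mpr hqsum
    have h2 : HasSum p (c * 1) := by
      rw [show p = fun n => c * q (n - (np - nq)) from funext hpn]
      exact hshift.mul_left c
    have hc1 : c = 1 := by
      have := hpsum.unique h2
      linarith
    exact ⟨np - nq, fun n => by rw [hpn n, hc1, one_mul]⟩
  · rintro ⟨k, hk⟩
    have hq' : ∀ m : ℤ, q m = p (m + k) := fun m => by
      rw [hk, add_sub_cancel_right]
    constructor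
    · intro n
      have h1 : conv p qt n = conv qt q (n - k) := by
        rw [conv_comm qt q]
        unfold conv
        rw [← (Equiv.addRight k).tsum_eq (fun j => p j * qt (n - j))]
        refine tsum_congr fun j => ?_
        simp only [Equiv.coe_addRight]
        rw [hk (j + k), show j + k - k = j by ring, show n - (j + k) = n - k - j by ring]
          
      rw [h1, hqtc]
      split_ifs <;> norm_num
    · intro n
      have h1 : conv q pt n = conv pt p (n + k) := by
        rw [conv_comm pt p]
        unfold conv
        rw [← (Equiv.addRight k).tsum_eq (fun j => p j * pt (n + k - j))]
        refine tsum_congr fun j => ?_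
        simp only [Equiv.coe_addRight]
        rw [hq' j, show n + k - (j + k) = n - j by ring]
      rw [h1, hptc]
      split_ifs <;> norm_num
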